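/- arXiv:2111.11978 — 2 statements merged into one kernel-verified Lean document; each statement's English description precedes it below -/
import Mathlib

section
/- Let f : R → R' be a faithfully flat ring homomorphism between local commutative rings and let x ∈ R. If f(x) is a strong divisor of R', then x is a strong divisor of R. -/
/-!
A faithfully flat extension `A → B` satisfies `IB ∩ A = I` for every ideal `I`; for principal
ideals this says that divisibility in `B` between images of elements of `A` descends to `A`.
Comparability of `(t)` with every ideal amounts to `t ∣ a ∨ a ∣ t` for every `a`, so it descends,
and regularity descends because a faithfully flat map is injective.
-/

/-- A *strong divisor* of a (local) commutative ring `R` is a regular element `t`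
such that the principal ideal `Rt` is comparable to every ideal of `R`. -/
def IsStrongDivisor {R : Type*} [CommRing R] (t : R) : Prop :=
  t ∈ nonZeroDivisors R ∧ ∀ I : Ideal R, I ≤ Ideal.span {t} ∨ Ideal.span {t} ≤ I

theorem isStrongDivisor_iff_dvd_or_dvd {R : Type*} [CommRing R] (t : R) :
    IsStrongDivisor t ↔ t ∈ nonZeroDivisors R ∧ ∀ a : R, t ∣ a ∨ a ∣ t := by
  refine and_congr_right fun _ => ⟨fun h a => ?_, fun h I => ?_⟩
  · simpa only [Ideal.span_singleton_le_span_singleton, or_comm] using h (Ideal.span {a})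
  · by_cases htI : t ∈ I
    · exact Or.inr ((Ideal.span_singleton_le_iff_mem I).mpr htI)
    · refine Or.inl fun a haI => Ideal.mem_span_singleton.mpr ?_
      exact (h a).resolve_right fun hat => htI (Ideal.mem_of_dvd I hat haI)

theorem dvd_of_algebraMap_dvd_algebraMap {A B : Type*} [CommRing A] [CommRing B] [Algebra A B]
    [Module.FaithfullyFlat A B] {t a : A} (h : algebraMap A B t ∣ algebraMap A B a) : t ∣ a := by
  rw [← Ideal.mem_span_singleton, ← (Ideal.span {t}).comap_map_eq_self_of_faithfullyFlat (B := B),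
    Ideal.mem_comap, Ideal.map_span, Set.image_singleton]
  exact Ideal.mem_span_singleton.mpr h

theorem isStrongDivisor_of_faithfullyFlat_general {R R' : Type*} [CommRing R] [CommRing R']
    (f : R →+* R')
    (hff : letI := f.toAlgebra; Module.FaithfullyFlat R R')
    (x : R) (hx : IsStrongDivisor (f x)) :
    IsStrongDivisor x := by
  let := f.toAlgebra
  rw [isStrongDivisor_iff_dvd_or_dvd] at hx ⊢
  obtain ⟨hregular, hcomparable⟩ := hx
  refine ⟨mem_nonZeroDivisors_of_injective (FaithfulSMul.algebraMap_injective R R') hregular,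
    fun a => ?_⟩
  exact (hcomparable (f a)).imp dvd_of_algebraMap_dvd_algebraMap dvd_of_algebraMap_dvd_algebraMap

/-- Let `f : R → R'` be a faithfully flat homomorphism between local rings
and `x ∈ R`.  If `f x` is a strong divisor of `R'`, then `x` is a strong divisor of `R`. -/
theorem isStrongDivisor_of_faithfullyFlat {R R' : Type*} [CommRing R] [CommRing R']
    [IsLocalRing R] [IsLocalRing R'] (f : R →+* R')
    (hff : letI := f.toAlgebra; Module.FaithfullyFlat R R')
    (x : R) (hx : IsStrongDivisor (f x)) :
    IsStrongDivisor x :=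
  isStrongDivisor_of_faithfullyFlat_general f hff x hx
end

section
/- Let R ⊆ S be a Prüfer extension of commutative rings with R local, and let I be a finitely generated ideal of R. Then I·S = S if and only if I = R·ρ for some strong divisor ρ of R that is invertible in S. -/
/-!
In a Prüfer extension `R ⊆ S` with `R` local, every `s ∈ S \ R` has an inverse in `R`. Indeed the
flat epimorphism `R → R[s]` is not surjective, hence not faithfully flat, so `𝔪 R[s] = R[s]`;
this makes `s` a unit, and if `s⁻¹ ∉ R` the same argument for `R[s⁻¹]` makes `s` integral over
`R`, and then lying over contradicts `𝔪 R[s] = R[s]`.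

Consequently an element `b ∈ R` invertible in `S` is comparable under divisibility with every
`a ∈ R` (look at `a / b`), so it is a strong divisor, and all non-units of `S` lie in `𝔪`. If
`IS = S`, the latter yields some `a ∈ I` invertible in `S`. Every element of `I` is then a multiple
of `a` or itself invertible in `S`, so `I` is the union of the chain of ideals `Rb` with `b ∈ I`
invertible in `S`; being finitely generated, `I` equals one of them.
-/

universe u v

/-- A ring homomorphism is a *flat epimorphism* if it makes the target a flat module over
the source and it is an epimorphism in the category of commutative rings. -/
def RingHom.IsFlatEpi {A : Type u} {B : Type v} [CommRing A] [CommRing B] (f : A →+* B) : Prop :=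
  (letI := f.toAlgebra; Module.Flat A B) ∧
    ∀ ⦃C : Type (max u v)⦄ [CommRing C], ∀ g h : B →+* C, g.comp f = h.comp f → g = h

/-- A ring homomorphism `f : A →+* B` is *Prüfer* if for every subring `T` of `B` containing
the image of `f`, the induced map `A →+* T` is a flat epimorphism.  For an extension of rings
`R ⊆ S` (i.e. `R : Subring S`), the extension is Prüfer precisely when `R.subtype.IsPrufer`. -/
def RingHom.IsPrufer {A : Type u} {B : Type v} [CommRing A] [CommRing B] (f : A →+* B) : Prop :=
  ∀ (T : Subring B) (hT : f.range ≤ T),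
    (f.codRestrict T fun a => hT (f.mem_range_self a)).IsFlatEpi

/-- The conductor ideal `(R :_R s) = {r ∈ R | r · s ∈ R}` of an element `s ∈ S`
with respect to a subring `R` of `S`. -/
def Subring.condIdeal {S : Type*} [CommRing S] (R : Subring S) (s : S) : Ideal R where
  carrier := {r : R | (r : S) * s ∈ R}
  add_mem' := by
    intro a b ha hb
    have := R.add_mem ha hb
    simpa [add_mul] using this
  zero_mem' := by simpa using R.zero_mem
  smul_mem' := by
    intro c x hx
    have := R.mul_mem c.2 hx
    simpa [mul_assoc] using this

open IsLocalRing Algebra Polynomial TensorProduct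

section FlatEpi

variable {A B : Type*} [CommRing A] [CommRing B] [Algebra A B]

theorem Algebra.IsEpi.surjective_algebraMap_of_faithfullyFlat [Module.FaithfullyFlat A B]
    [Algebra.IsEpi A B] : Function.Surjective (algebraMap A B) := by
  change Function.Surjective (Algebra.linearMap A B)
  rw [← Module.FaithfullyFlat.lTensor_surjective_iff_surjective A B, ← LinearMap.range_eq_top,
    _root_.eq_top_iff, ← TensorProduct.span_tmul_eq_top, Submodule.span_le]
  rintro _ ⟨b, b', rfl⟩
  refine ⟨(b * b') ⊗ₜ 1, ?_⟩
  calc (b * b') ⊗ₜ[A] (algebraMap A B 1) = (b ⊗ₜ[A] 1) * (b' ⊗ₜ[A] 1) := by simp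
    _ = (b ⊗ₜ[A] 1) * (1 ⊗ₜ[A] b') := by rw [(isEpi_iff_forall_one_tmul_eq A B).mp ‹_› b']
    _ = b ⊗ₜ[A] b' := by simp

theorem Algebra.IsEpi.map_maximalIdeal_eq_top_or_surjective [IsLocalRing A] [Module.Flat A B]
    [Algebra.IsEpi A B] :
    (maximalIdeal A).map (algebraMap A B) = ⊤ ∨ Function.Surjective (algebraMap A B) := by
  refine or_iff_not_imp_left.mpr fun hm => ?_
  have : Module.FaithfullyFlat A B := ⟨fun m hmax hsm => hm <| by
    rwa [eq_maximalIdeal hmax, Ideal.smul_top_eq_map, Submodule.restrictScalars_eq_top_iff] at hsm⟩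
  exact surjective_algebraMap_of_faithfullyFlat

end FlatEpi

theorem RingHom.IsFlatEpi.isEpi {A B : Type u} [CommRing A] [CommRing B] {f : A →+* B}
    (hf : f.IsFlatEpi) : letI := f.toAlgebra; Algebra.IsEpi A B := by
  let := f.toAlgebra
  rw [← CommRingCat.epi_iff_epi]
  exact ⟨fun g h e => CommRingCat.hom_ext (hf.2 g.hom h.hom congr(($e).hom))⟩

theorem RingHom.IsFlatEpi.map_maximalIdeal_eq_top_or_surjective {A B : Type u} [CommRing A]
    [CommRing B] [IsLocalRing A] {f : A →+* B} (hf : f.IsFlatEpi) :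
    (maximalIdeal A).map f = ⊤ ∨ Function.Surjective f := by
  let := f.toAlgebra
  have : Module.Flat A B := hf.1
  have := hf.isEpi
  exact Algebra.IsEpi.map_maximalIdeal_eq_top_or_surjective

section Adjoin

variable {R S : Type*} [CommRing R] [IsLocalRing R] [CommRing S] [Algebra R S]

theorem isUnit_of_map_maximalIdeal_adjoin_eq_top {s : S}
    (h : (maximalIdeal R).map (algebraMap R R[s]) = ⊤) : IsUnit s := by
  obtain ⟨p, hpm, hp⟩ := (mem_ideal_map_adjoin s _).mp (h ▸ Submodule.mem_top (x := 1))
  have hunit : IsUnit (algebraMap R S (1 - p.coeff 0)) :=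
    (isUnit_one_sub_self_of_mem_nonunits _ (hpm 0)).map _
  have hfactor : algebraMap R S (1 - p.coeff 0) = s * aeval s p.divX := by
    have hsplit := congrArg (aeval s) (X_mul_divX_add p)
    simp only [map_add, map_mul, aeval_X, aeval_C, hp, OneMemClass.coe_one] at hsplit
    rw [map_sub, map_one]
    linear_combination -hsplit
  exact isUnit_of_mul_isUnit_left (hfactor ▸ hunit)

theorem isIntegral_of_map_maximalIdeal_adjoin_inv_eq_top (u : Sˣ)
    (h : (maximalIdeal R).map (algebraMap R R[(↑u⁻¹ : S)]) = ⊤) : IsIntegral R (u : S) := by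
  let := u⁻¹.invertible
  obtain ⟨p, hp, hpu⟩ := exists_aeval_invOf_eq_zero_of_idealMap_adjoin_sup_span_eq_top
    (↑u⁻¹ : S) _ (maximalIdeal.isMaximal R).ne_top (top_unique (h.ge.trans le_sup_left))
  have hlead : IsUnit p.leadingCoeff := of_not_not fun hn => by simpa using sub_mem hn hp
  have hpu' : aeval (u : S) p = 0 := by simpa using hpu
  refine ⟨C hlead.unit⁻¹.1 * p, monic_C_mul_of_mul_leadingCoeff_eq_one hlead.val_inv_mul, ?_⟩
  rw [← aeval_def, map_mul, hpu', mul_zero]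

end Adjoin

namespace RingHom.IsPrufer

variable {S : Type u} [CommRing S] {R : Subring S} [IsLocalRing R]

theorem map_maximalIdeal_adjoin_eq_top (hR : R.subtype.IsPrufer) {s : S} (hs : s ∉ R) :
    (maximalIdeal R).map (algebraMap R R[s]) = ⊤ := by
  have hle : R.subtype.range ≤ R[s].toSubring := by
    rintro _ ⟨r, rfl⟩
    exact R[s].algebraMap_mem r
  refine ((hR _ hle).map_maximalIdeal_eq_top_or_surjective).resolve_right fun hsurj => hs ?_
  obtain ⟨r, hr⟩ := hsurj ⟨s, self_mem_adjoin_singleton R s⟩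
  have hrs : (r : S) = s := congrArg Subtype.val hr
  exact hrs ▸ r.2

theorem exists_mul_eq_one_of_notMem (hR : R.subtype.IsPrufer) {s : S} (hs : s ∉ R) :
    ∃ t ∈ R, t * s = 1 := by
  have hmap := hR.map_maximalIdeal_adjoin_eq_top hs
  obtain ⟨u, rfl⟩ := isUnit_of_map_maximalIdeal_adjoin_eq_top hmap
  by_contra! hinv
  have hint := isIntegral_of_map_maximalIdeal_adjoin_inv_eq_top u
    (hR.map_maximalIdeal_adjoin_eq_top fun h => hinv _ h u.inv_mul)
  have hinj : Function.Injective (algebraMap R R[(u : S)]) :=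
    fun a b h => Subtype.ext (by simpa using congrArg Subtype.val h)
  have : Algebra.IsIntegral R R[(u : S)] := Algebra.IsIntegral.adjoin (by simpa)
  exact (maximalIdeal.isMaximal R).ne_top
    ((Ideal.map_eq_top_iff _ hinj (algebraMap_isIntegral_iff.mpr this)).mp hmap)

theorem mem_span_singleton_or_mem_span_singleton (hR : R.subtype.IsPrufer) (a : R) {b : R}
    (hb : IsUnit (b : S)) : a ∈ Ideal.span {b} ∨ b ∈ Ideal.span {a} := by
  obtain ⟨β, hβ⟩ := hb
  by_cases hq : (a : S) * ↑β⁻¹ ∈ R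
  · refine .inl (Ideal.mem_span_singleton'.mpr ⟨⟨_, hq⟩, Subtype.ext ?_⟩)
    simp [← hβ]
  · obtain ⟨t, ht, htq⟩ := hR.exists_mul_eq_one_of_notMem hq
    refine .inr (Ideal.mem_span_singleton'.mpr ⟨⟨t, ht⟩, Subtype.ext ?_⟩)
    simp only [Subring.coe_mul, ← hβ]
    calc t * a = t * (a * ↑β⁻¹) * β := by simp [mul_assoc]
      _ = β := by rw [htq, one_mul]

theorem isStrongDivisor_of_isUnit (hR : R.subtype.IsPrufer) {ρ : R} (hρ : IsUnit (ρ : S)) :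
    IsStrongDivisor ρ := by
  refine ⟨mem_nonZeroDivisors_of_injective (f := R.subtype) Subtype.val_injective
    hρ.mem_nonZeroDivisors, fun K => or_iff_not_imp_left.mpr fun hK => ?_⟩
  obtain ⟨b, hbK, hbρ⟩ := SetLike.not_le_iff_exists.mp hK
  rw [Ideal.span_singleton_le_iff_mem]
  obtain ⟨r, rfl⟩ := Ideal.mem_span_singleton'.mp
    ((hR.mem_span_singleton_or_mem_span_singleton b hρ).resolve_left hbρ)
  exact K.mul_mem_left r hbK

theorem exists_mem_maximalIdeal_of_not_isUnit (hR : R.subtype.IsPrufer) {x : S}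
    (hx : ¬IsUnit x) : ∃ y ∈ maximalIdeal R, (y : S) = x := by
  have hxR : x ∈ R := by
    by_contra hxR
    obtain ⟨t, -, htx⟩ := hR.exists_mul_eq_one_of_notMem hxR
    exact hx (.of_mul_eq_one_right _ htx)
  exact ⟨⟨x, hxR⟩, fun hunit => hx (hunit.map R.subtype), rfl⟩

theorem exists_isUnit_of_map_eq_top (hR : R.subtype.IsPrufer) {I : Ideal R}
    (hI : I.map R.subtype = ⊤) : ∃ a ∈ I, IsUnit (a : S) := by
  by_contra! hI_nonunit
  suffices ∀ x ∈ I.map R.subtype, ∀ σ : S, ∃ y ∈ maximalIdeal R, (y : S) = σ * x by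
    obtain ⟨y, hy, hy1⟩ := this 1 (hI ▸ Submodule.mem_top) 1
    exact (maximalIdeal.isMaximal R).ne_top
      ((Ideal.eq_top_iff_one _).mpr ((by simpa using hy1 : y = 1) ▸ hy))
  intro x hx
  induction hx using Submodule.span_induction with
  | mem x hx =>
    obtain ⟨a, ha, rfl⟩ := hx
    exact fun σ => hR.exists_mem_maximalIdeal_of_not_isUnit
      fun hunit => hI_nonunit a ha (isUnit_of_mul_isUnit_right hunit)
  | zero => exact fun σ => ⟨0, zero_mem _, by simp⟩
  | add x z _ _ hx hz =>
    intro σ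
    obtain ⟨y, hy, hyx⟩ := hx σ
    obtain ⟨y', hy', hy'z⟩ := hz σ
    exact ⟨y + y', add_mem hy hy', by simp [mul_add, hyx, hy'z]⟩
  | smul c x _ hx => exact fun σ => by simpa [mul_assoc] using hx (σ * c)

theorem exists_eq_span_singleton_of_fg (hR : R.subtype.IsPrufer) {I : Ideal R} (hI : I.FG)
    {a : R} (haI : a ∈ I) (ha : IsUnit (a : S)) :
    ∃ ρ : R, IsUnit (ρ : S) ∧ I = Ideal.span {ρ} := by
  set D := {J : Ideal R | ∃ b ∈ I, IsUnit (b : S) ∧ Ideal.span {b} = J}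
  have hchain : IsChain (· ≤ ·) D := by
    rintro _ ⟨b, -, hb, rfl⟩ _ ⟨b', -, -, rfl⟩ -
    exact ((hR.isStrongDivisor_of_isUnit hb).2 _).symm
  have hle : I ≤ sSup D := fun x hxI =>
    (hR.mem_span_singleton_or_mem_span_singleton x ha).elim
      (fun hxa => le_sSup (show Ideal.span {a} ∈ D from ⟨a, haI, ha, rfl⟩) hxa)
      fun hax => by
        obtain ⟨r, hr⟩ := Ideal.mem_span_singleton'.mp hax
        have hx : IsUnit (x : S) := isUnit_of_mul_isUnit_right (by simpa [← hr] using ha)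
        exact le_sSup (show Ideal.span {x} ∈ D from ⟨x, hxI, hx, rfl⟩)
          (Ideal.mem_span_singleton_self x)
  obtain ⟨_, ⟨ρ, hρI, hρ, rfl⟩, hIρ⟩ :=
    (CompleteLattice.isCompactElement_iff_le_of_directed_sSup_le _ I).mp
      ((Submodule.fg_iff_compact I).mp hI) D ⟨_, a, haI, ha, rfl⟩ hchain.directedOn hle
  exact ⟨ρ, hρ, hIρ.antisymm ((Ideal.span_singleton_le_iff_mem I).mpr hρI)⟩

end RingHom.IsPrufer

/-- Let `R ⊆ S` be a Prüfer extension with `R` local and `I` a finitely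
generated ideal of `R`.  Then `I·S = S` iff `I = R·ρ` for some strong divisor `ρ` of `R`
invertible in `S`. -/
theorem sRegular_iff_principal_strong_divisor {S : Type*} [CommRing S] (R : Subring S)
    [IsLocalRing R] (hR : R.subtype.IsPrufer) (I : Ideal R) (hI : I.FG) :
    Ideal.map R.subtype I = ⊤ ↔
      ∃ ρ : R, IsStrongDivisor ρ ∧ IsUnit (ρ : S) ∧ I = Ideal.span {ρ} := by
  constructor
  · intro hIS
    obtain ⟨a, haI, ha⟩ := hR.exists_isUnit_of_map_eq_top hIS
    obtain ⟨ρ, hρ, rfl⟩ := hR.exists_eq_span_singleton_of_fg hI haI ha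
    exact ⟨ρ, hR.isStrongDivisor_of_isUnit hρ, hρ, rfl⟩
  · rintro ⟨ρ, -, hρ, rfl⟩
    rw [Ideal.map_span, Set.image_singleton, Ideal.span_singleton_eq_top]
    exact hρ
end
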